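/- Let k be a field and d ≥ 0. Bigrade B_d = k[a_1,…,a_d, b_1,…,b_d, c] by wt(a_i) = (2(d−i+1), 0), wt(b_i) = (2(d−i+1), −2), wt(c) = (2, 0), and bigrade A_{d+1} = k[a_1,…,a_{d+1}, b_1,…,b_{d+1}] by wt(a_i) = (2(d+2−i), 0), wt(b_i) = (2(d+2−i), −2). For a bigraded polynomial ring P and (m, j) ∈ ℤ×ℤ, let dim P_{(m,j)} denote the k-dimension of the space of weighted homogeneous polynomials of weight (m, j) (these spaces are finite-dimensional). Then for all (m, j) ∈ ℤ×ℤ: dim (B_d)_{(m,j)} − dim (B_d)_{(m−2,j)} = dim (A_{d+1})_{(m,j)} − dim (A_{d+1})_{(m−2(d+1), j+2)} − dim (A_{d+1})_{(m−2(d+1), j)} + dim (A_{d+1})_{(m−4(d+1), j+2)}. -/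

import Mathlib

/-!
The monomials of weight `μ` form a basis of the weight-`μ` space, so its dimension counts them.
Sorting the monomials by whether they are divisible by a variable `x` of weight `c` gives
`dim P_μ = dim P'_μ + dim P_{μ-c}`, where `P'` omits `x`. Applied to `c` in `B_d`, and to
`b_1` and then `a_1` in `A_{d+1}`, this writes both sides of the identity as the dimension of
the weight-`(m, j)` part of `k[a_1,…,a_d, b_1,…,b_d] ≅ k[a_2,…,a_{d+1}, b_2,…,b_{d+1}]`.
-/

open MvPolynomial

/-- Variables of `A_{d+1} = k[a_1,…,a_{d+1}, b_1,…,b_{d+1}]`: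
`Sum.inl p` is `a_{p+1}`, `Sum.inr p` is `b_{p+1}`. -/
abbrev AVar (d : ℕ) : Type := Fin (d + 1) ⊕ Fin (d + 1)

/-- Variables of `B_d = k[a_1,…,a_d, b_1,…,b_d, c]`. -/
abbrev BVar (d : ℕ) : Type := (Fin d ⊕ Fin d) ⊕ Unit

/-- Weights on `B_d`: `wt(a_m) = (2(d-m+1), 0)`, `wt(b_m) = (2(d-m+1), -2)`,
`wt(c) = (2, 0)`. -/
def wtB (d : ℕ) : BVar d → ℤ × ℤ
  | Sum.inl (Sum.inl p) => (2 * ((d : ℤ) - (p : ℕ)), 0)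
  | Sum.inl (Sum.inr p) => (2 * ((d : ℤ) - (p : ℕ)), -2)
  | Sum.inr _ => (2, 0)

/-- Weights on `A_{d+1}`: `wt(a_m) = (2(d+2-m), 0)`, `wt(b_m) = (2(d+2-m), -2)`. -/
def wtA (d : ℕ) : AVar d → ℤ × ℤ
  | Sum.inl p => (2 * ((d : ℤ) + 1 - (p : ℕ)), 0)
  | Sum.inr p => (2 * ((d : ℤ) + 1 - (p : ℕ)), -2)

/-- The dimension of the space of weighted homogeneous polynomials of weight `μ`. -/
noncomputable def wdim (k : Type) [Field k] {σ : Type} (w : σ → ℤ × ℤ) (μ : ℤ × ℤ) : ℕ :=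
  Module.finrank k ↥(weightedHomogeneousSubmodule k w μ)

def zeroOrSuccEquiv {X M : Type*} [AddCommGroup M] (W : X → M) (c μ : M) :
    {p : X × ℕ // W p.1 + p.2 • c = μ} ≃
      {x // W x = μ} ⊕ {p : X × ℕ // W p.1 + p.2 • c = μ - c} where
  toFun
    | ⟨(x, 0), h⟩ => .inl ⟨x, by simpa using h⟩
    | ⟨(x, n + 1), h⟩ => .inr ⟨(x, n), by rw [eq_sub_iff_add_eq, ← h, succ_nsmul, add_assoc]⟩
  invFun
    | .inl ⟨x, h⟩ => ⟨(x, 0), by simpa using h⟩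
    | .inr ⟨(x, n), h⟩ => ⟨(x, n + 1), by rw [succ_nsmul, ← add_assoc, h, sub_add_cancel]⟩
  left_inv := fun ⟨(x, n), h⟩ => by cases n <;> rfl
  right_inv := fun p => by rcases p with ⟨x, h⟩ | ⟨⟨x, n⟩, h⟩ <;> rfl

namespace Finsupp

variable {σ τ M : Type*}

section AddCommMonoid

variable [AddCommMonoid M]

lemma weight_mapDomain (g : σ → τ) (w : τ → M) (f : σ →₀ ℕ) :
    weight w (mapDomain g f) = weight (w ∘ g) f :=
  linearCombination_mapDomain (f := g) (l := f)

lemma weight_sumElim (w : σ ⊕ τ → M) (f : σ →₀ ℕ) (g : τ →₀ ℕ) :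
    weight w (sumElim f g) = weight (w ∘ Sum.inl) f + weight (w ∘ Sum.inr) g := by
  rw [sumElim_eq_add, map_add, weight_mapDomain, weight_mapDomain]

lemma finite_setOf_weight_eq [Finite σ] (φ : M →+ ℤ) {w : σ → M} (hw : ∀ s, 0 < φ (w s))
    (μ : M) : {f : σ →₀ ℕ | weight w f = μ}.Finite := by
  have := Fintype.ofFinite σ
  let w' : σ → ℕ := fun s => (φ (w s)).toNat
  have hw' : ∀ f : σ →₀ ℕ, (weight w' f : ℤ) = φ (weight w f) := by
    intro f
    simp [w', weight_eq_sum, map_sum, Int.toNat_of_nonneg (hw _).le]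
  refine (finite_of_nat_weight_eq w' (fun s => by simp [w', hw s]) (φ μ).toNat).subset ?_
  intro f (hf : weight w f = μ)
  subst hf
  have := hw' f
  change weight w' f = (φ (weight w f)).toNat
  omega

noncomputable def sumUnitWeightFiberEquiv (w : σ ⊕ Unit → M) (μ : M) :
    {f : σ ⊕ Unit →₀ ℕ // weight w f = μ} ≃
      {p : (σ →₀ ℕ) × ℕ // weight (w ∘ Sum.inl) p.1 + p.2 • w (Sum.inr ()) = μ} :=
  (sumFinsuppEquivProdFinsupp.trans ((Equiv.refl _).prodCongr (uniqueEquiv ()))).subtypeEquiv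
    fun f => by
      conv_lhs => rw [← sumFinsuppEquivProdFinsupp.symm_apply_apply f]
      rw [sumFinsuppEquivProdFinsupp_symm_apply, weight_sumElim, weight_eq_sum (w ∘ Sum.inr),
        Fintype.sum_unique]
      rfl

end AddCommMonoid

theorem card_sumUnit_weight_fiber [AddCommGroup M] (w : σ ⊕ Unit → M) (μ : M)
    [Finite {g : σ →₀ ℕ // weight (w ∘ Sum.inl) g = μ}]
    [Finite {f : σ ⊕ Unit →₀ ℕ // weight w f = μ - w (Sum.inr ())}] :
    Nat.card {f : σ ⊕ Unit →₀ ℕ // weight w f = μ} =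
      Nat.card {g : σ →₀ ℕ // weight (w ∘ Sum.inl) g = μ} +
        Nat.card {f : σ ⊕ Unit →₀ ℕ // weight w f = μ - w (Sum.inr ())} := by
  have := Finite.of_equiv _ (sumUnitWeightFiberEquiv w (μ - w (Sum.inr ())))
  rw [Nat.card_congr ((sumUnitWeightFiberEquiv w μ).trans (zeroOrSuccEquiv _ _ μ)),
    Nat.card_sum, Nat.card_congr (sumUnitWeightFiberEquiv w _)]

end Finsupp

open Finsupp

section wdim

variable (k : Type) [Field k] {σ τ : Type}

-- No finiteness is needed: for an infinite fiber both sides are `0`.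
theorem wdim_eq_card (w : σ → ℤ × ℤ) (μ : ℤ × ℤ) :
    wdim k w μ = Nat.card {f : σ →₀ ℕ // weight w f = μ} := by
  rw [wdim, weightedHomogeneousSubmodule_eq_finsupp_supported,
    (AddMonoidAlgebra.supportedEquivFinsupp _).finrank_eq, Module.finrank,
    rank_finsupp_self']
  rfl

theorem wdim_comp_equiv (e : σ ≃ τ) (w : τ → ℤ × ℤ) (μ : ℤ × ℤ) :
    wdim k (w ∘ e) μ = wdim k w μ := by
  rw [wdim_eq_card, wdim_eq_card]
  exact Nat.card_congr <| (equivCongrLeft e).subtypeEquiv fun f => by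
    rw [equivCongrLeft_apply, equivMapDomain_eq_mapDomain, weight_mapDomain]

variable [Finite σ]

theorem finite_weight_fiber_of_fst_pos {w : σ → ℤ × ℤ} (hw : ∀ s, 0 < (w s).1) (μ : ℤ × ℤ) :
    Finite {f : σ →₀ ℕ // weight w f = μ} :=
  (finite_setOf_weight_eq (AddMonoidHom.fst ℤ ℤ) hw μ).to_subtype

theorem finiteDimensional_weightedHomogeneousSubmodule {w : σ → ℤ × ℤ} (hw : ∀ s, 0 < (w s).1)
    (μ : ℤ × ℤ) :
    FiniteDimensional k (weightedHomogeneousSubmodule k w μ) := by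
  have := (finite_setOf_weight_eq (AddMonoidHom.fst ℤ ℤ) hw μ).to_subtype
  rw [weightedHomogeneousSubmodule_eq_finsupp_supported]
  exact Module.Finite.equiv (AddMonoidAlgebra.supportedEquivFinsupp _).symm

theorem wdim_sumUnit {w : σ ⊕ Unit → ℤ × ℤ} (hw : ∀ s, 0 < (w s).1) (μ : ℤ × ℤ) :
    wdim k w μ = wdim k (w ∘ Sum.inl) μ + wdim k w (μ - w (Sum.inr ())) := by
  have := finite_weight_fiber_of_fst_pos (w := w ∘ Sum.inl) (fun s => hw (Sum.inl s)) μ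
  have := finite_weight_fiber_of_fst_pos hw (μ - w (Sum.inr ()))
  simp only [wdim_eq_card]
  exact card_sumUnit_weight_fiber w μ

end wdim

section Weights

variable (k : Type) [Field k] (d : ℕ)

-- `a_1` and `b_1` (index `0`) are split off; `a_{i+1}`, `b_{i+1}` then carry the weights of
-- `a_i`, `b_i` in `B_d`.
def AVar.splitEquiv : ((Fin d ⊕ Fin d) ⊕ Unit) ⊕ Unit ≃ AVar d where
  toFun
    | .inl (.inl (.inl q)) => .inl q.succ
    | .inl (.inl (.inr q)) => .inr q.succ
    | .inl (.inr _) => .inl 0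
    | .inr _ => .inr 0
  invFun
    | .inl p => Fin.cases (.inl (.inr ())) (fun q => .inl (.inl (.inl q))) p
    | .inr p => Fin.cases (.inr ()) (fun q => .inl (.inl (.inr q))) p
  left_inv y := by rcases y with ((q | q) | _) | _ <;> simp
  right_inv x := by rcases x with p | p <;> induction p using Fin.cases <;> simp

theorem wtB_fst_pos : ∀ s, 0 < (wtB d s).1 := by
  rintro ((p | p) | _) <;> simp only [wtB] <;> omega

theorem wtA_fst_pos : ∀ s, 0 < (wtA d s).1 := by
  rintro (p | p) <;> simp only [wtA] <;> omega

theorem wtA_comp_splitEquiv_inl_inl :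
    wtA d ∘ AVar.splitEquiv d ∘ Sum.inl ∘ Sum.inl = wtB d ∘ Sum.inl := by
  funext x
  rcases x with p | p <;>
    simp only [Function.comp_apply, AVar.splitEquiv, Equiv.coe_fn_mk, wtA, wtB, Fin.val_succ] <;>
    push_cast <;> ring_nf

theorem wdim_wtB_eq_add (m j : ℤ) :
    wdim k (wtB d) (m, j) = wdim k (wtB d ∘ Sum.inl) (m, j) + wdim k (wtB d) (m - 2, j) := by
  rw [wdim_sumUnit k (wtB_fst_pos d)]
  simp [wtB]

theorem wdim_wtA_eq_add (m j : ℤ) :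
    wdim k (wtA d) (m, j) =
      wdim k (wtA d ∘ AVar.splitEquiv d ∘ Sum.inl) (m, j) +
        wdim k (wtA d) (m - 2 * (d + 1), j + 2) := by
  rw [← wdim_comp_equiv k (AVar.splitEquiv d), ← wdim_comp_equiv k (AVar.splitEquiv d) (wtA d),
    wdim_sumUnit k (w := wtA d ∘ AVar.splitEquiv d) fun s => wtA_fst_pos d _]
  congr 2

theorem wdim_wtA_comp_splitEquiv_inl_eq_add (m j : ℤ) :
    wdim k (wtA d ∘ AVar.splitEquiv d ∘ Sum.inl) (m, j) =
      wdim k (wtB d ∘ Sum.inl) (m, j) +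
        wdim k (wtA d ∘ AVar.splitEquiv d ∘ Sum.inl) (m - 2 * (d + 1), j) := by
  rw [wdim_sumUnit k (w := wtA d ∘ AVar.splitEquiv d ∘ Sum.inl) fun s => wtA_fst_pos d _,
    ← wtA_comp_splitEquiv_inl_inl]
  congr 2
  simp [wtA, AVar.splitEquiv]

end Weights

/-- the spaces of weighted homogeneous polynomials in `B_d` and
`A_{d+1}` are finite dimensional, and for all `(m, j)`:
`dim (B_d)_{(m,j)} - dim (B_d)_{(m-2,j)} = dim (A_{d+1})_{(m,j)}
 - dim (A_{d+1})_{(m-2(d+1), j+2)} - dim (A_{d+1})_{(m-2(d+1), j)}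
 + dim (A_{d+1})_{(m-4(d+1), j+2)}`. -/
theorem statement11 (k : Type) [Field k] (d : ℕ) :
    (∀ μ : ℤ × ℤ,
      FiniteDimensional k ↥(weightedHomogeneousSubmodule k (wtB d) μ) ∧
      FiniteDimensional k ↥(weightedHomogeneousSubmodule k (wtA d) μ)) ∧
    ∀ m j : ℤ,
      (wdim k (wtB d) (m, j) : ℤ) - wdim k (wtB d) (m - 2, j) =
        (wdim k (wtA d) (m, j) : ℤ)
          - wdim k (wtA d) (m - 2 * (d + 1), j + 2)
          - wdim k (wtA d) (m - 2 * (d + 1), j)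
          + wdim k (wtA d) (m - 4 * (d + 1), j + 2) := by
  refine ⟨fun μ => ⟨finiteDimensional_weightedHomogeneousSubmodule k (wtB_fst_pos d) μ,
    finiteDimensional_weightedHomogeneousSubmodule k (wtA_fst_pos d) μ⟩, fun m j => ?_⟩
  have hB := wdim_wtB_eq_add k d m j
  have hA := wdim_wtA_eq_add k d m j
  have hA₂ := wdim_wtA_eq_add k d (m - 2 * (d + 1)) j
  have hA' := wdim_wtA_comp_splitEquiv_inl_eq_add k d m j
  rw [show m - 2 * (d + 1) - 2 * (d + 1) = m - 4 * (d + 1) by ring] at hA₂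
  omega
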